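/- arXiv:2511.22932 — 2 statements merged into one kernel-verified Lean document; each statement's English description precedes it below -/
import Mathlib

section
/- Let U be a traveling wave with speed c. Then the function ξ ↦ f(U(ξ)) is Lebesgue integrable on ℝ and c = ∫_{−∞}^{+∞} f(U(ξ)) dξ; in particular c > 0. -/
open Real Set Filter

noncomputable def delta1 (α : ℝ) : ℝ := Real.cos α
noncomputable def delta2 (α : ℝ) : ℝ := (1/2) * Real.cos α + (Real.sqrt 3 / 2) * Real.sin α
noncomputable def delta3 (α : ℝ) : ℝ := (1/2) * Real.cos α - (Real.sqrt 3 / 2) * Real.sin α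

/-- The function g_α(λ) from the minimal wave speed formula, with `a` playing the role of f'(0). -/
noncomputable def gfun (a α l : ℝ) : ℝ :=
  (1/6) * ((Real.exp (l * delta1 α) + Real.exp (-(l * delta1 α)))
    + (Real.exp (l * delta2 α) + Real.exp (-(l * delta2 α)))
    + (Real.exp (l * delta3 α) + Real.exp (-(l * delta3 α)))) - 1 + a

/-- The minimal wave speed c*(α) = inf_{λ>0} g_α(λ)/λ. -/
noncomputable def cstar (a α : ℝ) : ℝ := sInf {c : ℝ | ∃ l : ℝ, 0 < l ∧ c = gfun a α l / l}

/-- The discrete diffusion operator on the hexagonal lattice, in direction α. -/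
noncomputable def Dh (α : ℝ) (U : ℝ → ℝ) (ξ : ℝ) : ℝ :=
  (U (ξ + delta1 α) + U (ξ - delta1 α)) + (U (ξ + delta2 α) + U (ξ - delta2 α))
    + (U (ξ + delta3 α) + U (ξ - delta3 α)) - 6 * U ξ

/-- Fisher-KPP conditions: f is C¹ on [0,1] with derivative f', f(0)=f(1)=0, f'(0)>0,
and 0 < f(s) ≤ f'(0)·s on (0,1). -/
def FisherKPP (f f' : ℝ → ℝ) : Prop :=
  (∀ s ∈ Set.Icc (0:ℝ) 1, HasDerivAt f (f' s) s) ∧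
  ContinuousOn f' (Set.Icc (0:ℝ) 1) ∧
  f 0 = 0 ∧ f 1 = 0 ∧ 0 < f' 0 ∧
  (∀ s ∈ Set.Ioo (0:ℝ) 1, 0 < f s ∧ f s ≤ f' 0 * s)

/-- A traveling wave with speed c: a C¹ function U : ℝ → [0,1] solving
c·U′ = (1/6)·𝒟_h[U] + f(U) with limits 0 at −∞ and 1 at +∞. -/
def IsTravelingWave (α : ℝ) (f : ℝ → ℝ) (c : ℝ) (U : ℝ → ℝ) : Prop :=
  ContDiff ℝ 1 U ∧ (∀ ξ, U ξ ∈ Set.Icc (0:ℝ) 1) ∧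
  (∀ ξ, c * deriv U ξ = (1/6) * Dh α U ξ + f (U ξ)) ∧
  Filter.Tendsto U Filter.atBot (nhds 0) ∧ Filter.Tendsto U Filter.atTop (nhds 1)

/-!
Integrating the wave equation over `[-R, R]` gives
`∫_{-R}^{R} f(U) = c (U(R) - U(-R)) - (1/6) ∫_{-R}^{R} 𝒟_h[U]`.
Each shift difference `∫_{-R}^{R} (U(ξ + δ) - U(ξ)) = ∫_R^{R+δ} U - ∫_{-R}^{-R+δ} U`
tends to `δ (1 - 0)`, and the six shifts `±δ_m` cancel in pairs, so `∫_{-R}^{R} f(U) → c`.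
Since `f(U) ≥ 0`, this yields integrability and `c = ∫ f(U)`; positivity follows because `U`
takes the value `1/2`, where `f` is positive.
-/

open MeasureTheory intervalIntegral Topology

section UniformShift

variable {X : Type*} [PseudoMetricSpace X] {U : ℝ → X} {L : X} {s : Set ℝ}

lemma tendstoUniformlyOn_comp_add_atTop (h : Tendsto U atTop (𝓝 L)) (hs : BddBelow s) :
    TendstoUniformlyOn (fun R t => U (R + t)) (fun _ => L) atTop s := by
  obtain ⟨m, hm⟩ := hs
  refine Metric.tendstoUniformlyOn_iff.2 fun ε hε => ?_
  obtain ⟨M, hM⟩ := eventually_atTop.1 (h.eventually (Metric.ball_mem_nhds L hε))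
  filter_upwards [eventually_ge_atTop (M - m)] with R hR t ht
  exact Metric.mem_ball'.1 (hM _ (by linarith [hm ht]))

lemma tendstoUniformlyOn_comp_add_atBot (h : Tendsto U atBot (𝓝 L)) (hs : BddAbove s) :
    TendstoUniformlyOn (fun R t => U (R + t)) (fun _ => L) atBot s := by
  obtain ⟨m, hm⟩ := hs
  refine Metric.tendstoUniformlyOn_iff.2 fun ε hε => ?_
  obtain ⟨M, hM⟩ := eventually_atBot.1 (h.eventually (Metric.ball_mem_nhds L hε))
  filter_upwards [eventually_le_atBot (M - m)] with R hR t ht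
  exact Metric.mem_ball'.1 (hM _ (by linarith [hm ht]))

end UniformShift

section IntegralShift

variable {E : Type*} [NormedAddCommGroup E] [NormedSpace ℝ E] {U : ℝ → E}

lemma tendsto_integral_add_of_tendstoUniformlyOn [CompleteSpace E] {l : Filter ℝ}
    [l.IsCountablyGenerated] {L : E} {δ : ℝ} (hU : Continuous U)
    (h : TendstoUniformlyOn (fun R t => U (R + t)) (fun _ => L) l (uIcc 0 δ)) :
    Tendsto (fun R => ∫ ξ in R..R + δ, U ξ) l (𝓝 (δ • L)) := by
  have := h.tendsto_intervalIntegral_of_continuousOn (μ := volume)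
    (.of_forall fun R => (hU.comp (continuous_const_add R)).continuousOn)
  simpa [integral_comp_add_left] using this

lemma integral_comp_add_right_sub_integral (hU : Continuous U) (a b δ : ℝ) :
    (∫ ξ in a..b, U (ξ + δ)) - ∫ ξ in a..b, U ξ =
      (∫ ξ in b..b + δ, U ξ) - ∫ ξ in a..a + δ, U ξ := by
  rw [integral_comp_add_right U δ]
  exact integral_interval_sub_interval_comm' (hU.intervalIntegrable _ _)
    (hU.intervalIntegrable _ _) (hU.intervalIntegrable _ _)

lemma tendsto_integral_comp_add_right_sub [CompleteSpace E] {L₀ L₁ : E} (hU : Continuous U)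
    (hbot : Tendsto U atBot (𝓝 L₀)) (htop : Tendsto U atTop (𝓝 L₁)) (δ : ℝ) :
    Tendsto (fun R => ∫ ξ in -R..R, (U (ξ + δ) - U ξ)) atTop (𝓝 (δ • (L₁ - L₀))) := by
  have hright := tendsto_integral_add_of_tendstoUniformlyOn (δ := δ) hU
    (tendstoUniformlyOn_comp_add_atTop htop isCompact_uIcc.bddBelow)
  have hleft := tendsto_integral_add_of_tendstoUniformlyOn (δ := δ) hU
    (tendstoUniformlyOn_comp_add_atBot hbot isCompact_uIcc.bddAbove)
  have hcomp : Continuous fun ξ => U (ξ + δ) := hU.comp (continuous_add_const δ)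
  rw [smul_sub]
  refine (hright.sub (hleft.comp tendsto_neg_atTop_atBot)).congr fun R => ?_
  rw [integral_sub (hcomp.intervalIntegrable _ _) (hU.intervalIntegrable _ _),
    integral_comp_add_right_sub_integral hU]
  rfl

end IntegralShift

noncomputable def hexShift (α : ℝ) : Fin 6 → ℝ :=
  ![delta1 α, -delta1 α, delta2 α, -delta2 α, delta3 α, -delta3 α]

lemma sum_hexShift (α : ℝ) : ∑ i, hexShift α i = 0 := by
  simp [hexShift, Fin.sum_univ_six]

lemma Dh_eq_sum (α : ℝ) (U : ℝ → ℝ) (ξ : ℝ) :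
    Dh α U ξ = ∑ i, (U (ξ + hexShift α i) - U ξ) := by
  simp only [Dh, hexShift, Fin.sum_univ_six]
  simp only [Matrix.cons_val, ← sub_eq_add_neg]
  ring

lemma tendsto_integral_Dh {α L₀ L₁ : ℝ} {U : ℝ → ℝ} (hU : Continuous U)
    (hbot : Tendsto U atBot (𝓝 L₀)) (htop : Tendsto U atTop (𝓝 L₁)) :
    Tendsto (fun R => ∫ ξ in -R..R, Dh α U ξ) atTop (𝓝 0) := by
  have hshift (i : Fin 6) : Continuous fun ξ => U (ξ + hexShift α i) - U ξ :=
    (hU.comp (continuous_add_const _)).sub hU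
  have hsum := tendsto_finsetSum Finset.univ fun i _ =>
    tendsto_integral_comp_add_right_sub hU hbot htop (hexShift α i)
  rw [← Finset.sum_smul, sum_hexShift, zero_smul] at hsum
  refine hsum.congr fun R => ?_
  simp_rw [Dh_eq_sum]
  exact (integral_finsetSum fun i _ => (hshift i).intervalIntegrable _ _).symm

namespace FisherKPP

variable {f f' : ℝ → ℝ}

lemma continuousOn (hf : FisherKPP f f') : ContinuousOn f (Icc 0 1) :=
  fun s hs => (hf.1 s hs).continuousAt.continuousWithinAt

lemma pos (hf : FisherKPP f f') {s : ℝ} (hs : s ∈ Ioo 0 1) : 0 < f s :=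
  (hf.2.2.2.2.2 s hs).1

lemma nonneg (hf : FisherKPP f f') {s : ℝ} (hs : s ∈ Icc 0 1) : 0 ≤ f s := by
  rcases hs.1.eq_or_lt with rfl | h0
  · exact hf.2.2.1.ge
  rcases hs.2.eq_or_lt with rfl | h1
  · exact hf.2.2.2.1.ge
  exact (hf.pos ⟨h0, h1⟩).le

end FisherKPP

namespace IsTravelingWave

variable {α c : ℝ} {f U : ℝ → ℝ}

lemma integral_eq (hU : IsTravelingWave α f c U) (a b : ℝ) :
    ∫ ξ in a..b, f (U ξ) = c * (U b - U a) - (1 / 6) * ∫ ξ in a..b, Dh α U ξ := by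
  obtain ⟨hC1, -, heq, -, -⟩ := hU
  have hderiv : Continuous (deriv U) := hC1.continuous_deriv le_rfl
  have hDh : Continuous (Dh α U) := by
    have := hC1.continuous
    unfold Dh
    fun_prop
  rw [← integral_deriv_eq_sub (fun x _ => hC1.differentiable one_ne_zero x)
      (hderiv.intervalIntegrable _ _), ← intervalIntegral.integral_const_mul,
    ← intervalIntegral.integral_const_mul,
    ← integral_sub ((hderiv.intervalIntegrable _ _).const_mul c)
      ((hDh.intervalIntegrable _ _).const_mul _)]
  exact integral_congr fun ξ _ => by linarith [heq ξ]

lemma tendsto_integral (hU : IsTravelingWave α f c U) :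
    Tendsto (fun R => ∫ ξ in -R..R, f (U ξ)) atTop (𝓝 c) := by
  have ⟨hC1, _, _, hbot, htop⟩ := hU
  have hbdry : Tendsto (fun R => c * (U R - U (-R))) atTop (𝓝 (c * (1 - 0))) :=
    (htop.sub (hbot.comp tendsto_neg_atTop_atBot)).const_mul c
  have hDh := (tendsto_integral_Dh (α := α) hC1.continuous hbot htop).const_mul (1 / 6)
  simpa [hU.integral_eq] using hbdry.sub hDh

lemma exists_eq_of_mem_Ioo (hU : IsTravelingWave α f c U) {y : ℝ} (hy : y ∈ Ioo 0 1) :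
    ∃ ξ, U ξ = y :=
  let ⟨hC1, _, _, hbot, htop⟩ := hU
  mem_range_of_exists_le_of_exists_ge hC1.continuous
    (hbot.eventually (eventually_le_nhds hy.1)).exists
    (htop.eventually (eventually_ge_nhds hy.2)).exists

end IsTravelingWave

lemma integrable_of_nonneg_of_tendsto_intervalIntegral {g : ℝ → ℝ} {I : ℝ}
    (hg : LocallyIntegrable g) (hg0 : 0 ≤ g)
    (h : Tendsto (fun R => ∫ ξ in -R..R, g ξ) atTop (𝓝 I)) : Integrable g := by
  refine integrable_of_intervalIntegral_norm_tendsto I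
    (fun R => (hg.integrableOn_isCompact isCompact_Icc).mono_set Ioc_subset_Icc_self)
    tendsto_neg_atTop_atBot tendsto_id (h.congr fun R => ?_)
  exact integral_congr fun ξ _ => (Real.norm_of_nonneg (hg0 ξ)).symm

theorem stmt14 (α : ℝ) (f f' : ℝ → ℝ) (hf : FisherKPP f f')
    (c : ℝ) (U : ℝ → ℝ) (hU : IsTravelingWave α f c U) :
    MeasureTheory.Integrable (fun ξ : ℝ => f (U ξ)) ∧
    c = ∫ ξ : ℝ, f (U ξ) ∧ 0 < c := by
  have hcont : Continuous fun ξ => f (U ξ) :=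
    hf.continuousOn.comp_continuous hU.1.continuous hU.2.1
  have hnonneg : 0 ≤ fun ξ => f (U ξ) := fun ξ => hf.nonneg (hU.2.1 ξ)
  have hint := integrable_of_nonneg_of_tendsto_intervalIntegral hcont.locallyIntegrable hnonneg
    hU.tendsto_integral
  have hc : c = ∫ ξ, f (U ξ) := tendsto_nhds_unique hU.tendsto_integral
    (intervalIntegral_tendsto_integral hint tendsto_neg_atTop_atBot tendsto_id)
  obtain ⟨ξ₀, hξ₀⟩ := hU.exists_eq_of_mem_Ioo (y := 1 / 2) ⟨by norm_num, by norm_num⟩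
  have hpos : f (U ξ₀) ≠ 0 := (hf.pos (hξ₀ ▸ ⟨by norm_num, by norm_num⟩)).ne'
  exact ⟨hint, hc, hc ▸ integral_pos_of_integrable_nonneg_nonzero hcont hint hnonneg hpos⟩
end

section
/- (Minimal wave speed on the square lattice.) The function β ↦ c_s*(β) satisfies c_s*(β + π/2) = c_s*(β) for all β ∈ ℝ, is strictly decreasing on [0, π/4], and is strictly increasing on [π/4, π/2]: if 0 ≤ β₁ < β₂ ≤ π/4 then c_s*(β₂) < c_s*(β₁), and if π/4 ≤ β₁ < β₂ ≤ π/2 then c_s*(β₁) < c_s*(β₂). -/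
/-!
Since `exp t + exp (-t) = 2 cosh t`, the quotient minimised over `ν > 0` is
`(2 cosh (ν cos β) + 2 cosh (ν sin β) - 4 + a) / ν ≥ ν + a / ν` (by `cosh t ≥ 1 + t² / 2`), so for
`a > 0` the infimum is attained, and it suffices that `β ↦ cosh (ν cos β) + cosh (ν sin β)` is
strictly decreasing on `[0, π/4]` for every `ν > 0`. Its derivative there is
`ν (cos β sinh (ν sin β) - sin β sinh (ν cos β)) < 0`, because `sinh t / t` is strictly increasing
on `t > 0` (`sinh` is strictly convex on `[0, ∞)`) and `ν sin β < ν cos β`. The lattice symmetries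
`β ↦ β + π/2` and `β ↦ π/2 - β` give periodicity and transfer the monotonicity to `[π/4, π/2]`.
-/

open Real Set

/-- The minimal wave speed on the two-dimensional square lattice, in direction β,
with `a` playing the role of f'(0). -/
noncomputable def csSq (a β : ℝ) : ℝ :=
  sInf {c : ℝ | ∃ ν : ℝ, 0 < ν ∧
    c = (Real.exp (ν * Real.cos β) + Real.exp (-(ν * Real.cos β))
      + Real.exp (ν * Real.sin β) + Real.exp (-(ν * Real.sin β)) - 4 + a) / ν}

lemma one_add_sq_div_two_le_cosh (x : ℝ) : 1 + x ^ 2 / 2 ≤ cosh x := by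
  have h := sum_le_hasSum (Finset.range 2)
    (fun n _ => div_nonneg (Even.pow_nonneg ⟨n, two_mul n⟩ x) (Nat.cast_nonneg _))
    (hasSum_cosh x)
  simpa [Finset.sum_range_succ] using h

lemma sinh_div_self_lt_sinh_div_self {x y : ℝ} (hx : 0 < x) (hxy : x < y) :
    sinh x / x < sinh y / y := by
  have hconv : StrictConvexOn ℝ (Ici 0) sinh :=
    strictConvexOn_of_deriv2_pos (convex_Ici 0) continuous_sinh.continuousOn fun t ht => by
      rw [interior_Ici, mem_Ioi] at ht
      simpa [Real.deriv_sinh, Real.deriv_cosh] using ht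
  simpa using hconv.secant_strict_mono self_mem_Ici hx.le (hx.trans hxy).le hx.ne'
    (hx.trans hxy).ne' hxy

/-- Half the lattice symbol `∑ exp (± ν cos β) + exp (± ν sin β)` in direction `β`. -/
noncomputable def coshSum (ν β : ℝ) : ℝ := cosh (ν * cos β) + cosh (ν * sin β)

lemma coshSum_add_pi_div_two (ν β : ℝ) : coshSum ν (β + π / 2) = coshSum ν β := by
  rw [coshSum, coshSum, cos_add_pi_div_two, sin_add_pi_div_two, mul_neg, cosh_neg, add_comm]

lemma coshSum_pi_div_two_sub (ν β : ℝ) : coshSum ν (π / 2 - β) = coshSum ν β := by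
  rw [coshSum, coshSum, cos_pi_div_two_sub, sin_pi_div_two_sub, add_comm]

lemma hasDerivAt_coshSum (ν β : ℝ) :
    HasDerivAt (coshSum ν) (ν * (cos β * sinh (ν * sin β) - sin β * sinh (ν * cos β))) β :=
  (((hasDerivAt_cos β).const_mul ν).cosh.add ((hasDerivAt_sin β).const_mul ν).cosh).congr_deriv
    (by ring)

lemma coshSum_strictAntiOn {ν : ℝ} (hν : 0 < ν) : StrictAntiOn (coshSum ν) (Icc 0 (π / 4)) := by
  refine strictAntiOn_of_deriv_neg (convex_Icc 0 (π / 4)) (by unfold coshSum; fun_prop)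
    fun β hβ => ?_
  rw [interior_Icc, mem_Ioo] at hβ
  rw [(hasDerivAt_coshSum ν β).deriv]
  have hπ := pi_pos
  have hsin : 0 < sin β := sin_pos_of_pos_of_lt_pi hβ.1 (by linarith)
  have hsin_lt_cos : sin β < cos β :=
    calc sin β < sin (π / 4) := sin_lt_sin_of_lt_of_le_pi_div_two (by linarith) (by linarith) hβ.2
      _ = cos (π / 4) := by rw [sin_pi_div_four, cos_pi_div_four]
      _ < cos β := cos_lt_cos_of_nonneg_of_le_pi hβ.1.le (by linarith) hβ.2
  have key := sinh_div_self_lt_sinh_div_self (mul_pos hν hsin)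
    (mul_lt_mul_of_pos_left hsin_lt_cos hν)
  rw [div_lt_div_iff₀ (by positivity) (mul_pos hν (hsin.trans hsin_lt_cos))] at key
  have : cos β * sinh (ν * sin β) - sin β * sinh (ν * cos β) < 0 := by nlinarith
  exact mul_neg_of_pos_of_neg hν this

noncomputable def csSqQuot (a β ν : ℝ) : ℝ := (2 * coshSum ν β - 4 + a) / ν

lemma csSqQuot_eq_exp (a β ν : ℝ) : csSqQuot a β ν = (exp (ν * cos β) + exp (-(ν * cos β))
    + exp (ν * sin β) + exp (-(ν * sin β)) - 4 + a) / ν := by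
  rw [csSqQuot, coshSum, cosh_eq, cosh_eq]
  ring

lemma csSq_eq_sInf_image (a β : ℝ) : csSq a β = sInf (csSqQuot a β '' Ioi 0) := by
  simp only [csSq, csSqQuot_eq_exp, image, mem_Ioi, eq_comm (a := (_ : ℝ) / _)]

lemma add_div_le_csSqQuot (a β : ℝ) {ν : ℝ} (hν : 0 < ν) : ν + a / ν ≤ csSqQuot a β ν := by
  have hcos := one_add_sq_div_two_le_cosh (ν * cos β)
  have hsin := one_add_sq_div_two_le_cosh (ν * sin β)
  rw [csSqQuot, coshSum, add_div' _ _ _ hν.ne']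
  gcongr
  nlinarith [sin_sq_add_cos_sq β]

lemma exists_isMinOn_Ioi_of_add_div_le {f : ℝ → ℝ} {a : ℝ} (ha : 0 < a)
    (hf : ContinuousOn f (Ioi 0)) (hf_ge : ∀ ν ∈ Ioi (0 : ℝ), ν + a / ν ≤ f ν) :
    ∃ ν ∈ Ioi (0 : ℝ), IsMinOn f (Ioi 0) ν := by
  set M := f 1
  have hM : 1 + a ≤ M := by simpa using hf_ge 1 (mem_Ioi.2 one_pos)
  have hM₀ : 0 < M := by linarith
  have hK : Icc (a / M) M ⊆ Ioi 0 := fun ν hν => lt_of_lt_of_le (div_pos ha hM₀) hν.1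
  have h1K : (1 : ℝ) ∈ Icc (a / M) M := ⟨(div_le_one hM₀).2 (by linarith), by linarith⟩
  obtain ⟨ν, hνK, hmin⟩ := isCompact_Icc.exists_isMinOn ⟨1, h1K⟩ (hf.mono hK)
  refine ⟨ν, hK hνK, fun μ hμ => ?_⟩
  by_cases hμK : μ ∈ Icc (a / M) M
  · exact hmin hμK
  -- outside `[a / M, M]` the bound `μ + a / μ` already exceeds `M = f 1`
  have hM_le : M ≤ μ + a / μ := by
    rcases not_and_or.1 hμK with hlow | hhigh
    · have : M ≤ a / μ := (le_div_iff₀ hμ).2 ((lt_div_iff₀' hM₀).1 (not_le.1 hlow)).le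
      linarith [mem_Ioi.1 hμ]
    · linarith [not_le.1 hhigh, div_pos ha hμ]
  exact (hmin h1K).trans (hM_le.trans (hf_ge μ hμ))

lemma isLeast_csSqQuot {a : ℝ} (ha : 0 < a) (β : ℝ) :
    ∃ ν > 0, IsLeast (csSqQuot a β '' Ioi 0) (csSqQuot a β ν) := by
  have hcont : ContinuousOn (csSqQuot a β) (Ioi 0) :=
    ContinuousOn.div (by unfold coshSum; fun_prop) continuousOn_id fun ν hν => ne_of_gt hν
  obtain ⟨ν, hν, hmin⟩ :=
    exists_isMinOn_Ioi_of_add_div_le ha hcont fun ν hν => add_div_le_csSqQuot a β hν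
  exact ⟨ν, hν, mem_image_of_mem _ hν, forall_mem_image.2 hmin⟩

lemma csSq_le_csSqQuot {a : ℝ} (ha : 0 < a) (β : ℝ) {ν : ℝ} (hν : 0 < ν) :
    csSq a β ≤ csSqQuot a β ν := by
  obtain ⟨_, _, hleast⟩ := isLeast_csSqQuot ha β
  rw [csSq_eq_sInf_image]
  exact csInf_le hleast.bddBelow (mem_image_of_mem _ hν)

lemma csSq_strictAntiOn {a : ℝ} (ha : 0 < a) : StrictAntiOn (csSq a) (Icc 0 (π / 4)) := by
  intro β₁ hβ₁ β₂ hβ₂ hβ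
  obtain ⟨ν, hν, hleast⟩ := isLeast_csSqQuot ha β₁
  calc csSq a β₂ ≤ csSqQuot a β₂ ν := csSq_le_csSqQuot ha β₂ hν
    _ < csSqQuot a β₁ ν := by
      unfold csSqQuot
      gcongr
      exact coshSum_strictAntiOn hν hβ₁ hβ₂ hβ
    _ = csSq a β₁ := by rw [csSq_eq_sInf_image, hleast.csInf_eq]

lemma csSq_add_pi_div_two (a β : ℝ) : csSq a (β + π / 2) = csSq a β := by
  rw [csSq_eq_sInf_image, csSq_eq_sInf_image]
  unfold csSqQuot
  simp only [coshSum_add_pi_div_two]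

lemma csSq_pi_div_two_sub (a β : ℝ) : csSq a (π / 2 - β) = csSq a β := by
  rw [csSq_eq_sInf_image, csSq_eq_sInf_image]
  unfold csSqQuot
  simp only [coshSum_pi_div_two_sub]

theorem stmt19 (a : ℝ) (ha : 0 < a) :
    (∀ β : ℝ, csSq a (β + Real.pi/2) = csSq a β) ∧
    (∀ β₁ β₂ : ℝ, 0 ≤ β₁ → β₁ < β₂ → β₂ ≤ Real.pi/4 → csSq a β₂ < csSq a β₁) ∧
    (∀ β₁ β₂ : ℝ, Real.pi/4 ≤ β₁ → β₁ < β₂ → β₂ ≤ Real.pi/2 → csSq a β₁ < csSq a β₂) := by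
  refine ⟨csSq_add_pi_div_two a, fun β₁ β₂ h₀ hβ h₄ => ?_, fun β₁ β₂ h₄ hβ h₂ => ?_⟩
  · exact csSq_strictAntiOn ha ⟨h₀, by linarith⟩ ⟨by linarith, h₄⟩ hβ
  · rw [← csSq_pi_div_two_sub a β₁, ← csSq_pi_div_two_sub a β₂]
    exact csSq_strictAntiOn ha ⟨by linarith, by linarith⟩ ⟨by linarith, by linarith⟩
      (by linarith)
end
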